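/- Fix an integer k ≥ 3. There exist constants C₁(k) > 0 and C₂(k) > 0, depending only on k, such that the following holds. Consider the process Boot3(t) on Q_{k,n} with base threshold ⌈N/2⌉ (where N = Σ_{i=1}^k C(n,i)) and t = ⌈C₂(k)·n^{k/2}⌉, where each vertex is initially infected independently with probability p = 1/2 − C₁(k)·√(log n)/n^{k/2}. Then P(A_3 = A_2) → 1 as n → ∞. -/

import Mathlib

open Finset Filter
open scoped Classical

noncomputable section

/-- The infected set after `i` steps of `r`-neighbour bootstrap percolation on the graph `G`,
starting from the initial infected set `A0`:
`A_{i+1} = A_i ∪ {v : |N(v) ∩ A_i| ≥ r}`. -/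
def bootSets {V : Type*} [Fintype V] [DecidableEq V] (G : SimpleGraph V) (r : ℕ)
    (A0 : Finset V) : ℕ → Finset V
  | 0 => A0
  | i + 1 =>
      bootSets G r A0 i ∪
        Finset.univ.filter fun v => r ≤ (G.neighborFinset v ∩ bootSets G r A0 i).card

/-- `A0` percolates under the `r`-neighbour bootstrap process on `G`. -/
def percolates {V : Type*} [Fintype V] [DecidableEq V] (G : SimpleGraph V) (r : ℕ)
    (A0 : Finset V) : Prop :=
  ∃ i, bootSets G r A0 i = Finset.univ

/-- The probability that the initial infected set is exactly `A`, when every vertex is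
infected independently with probability `p`. -/
def configProb {V : Type*} [Fintype V] [DecidableEq V] (p : ℝ) (A : Finset V) : ℝ :=
  p ^ A.card * (1 - p) ^ (Fintype.card V - A.card)

/-- The probability of the event `E` about the initial infected set, when every vertex is
infected independently with probability `p`. -/
def probEvent {V : Type*} [Fintype V] [DecidableEq V] (p : ℝ) (E : Finset V → Prop) : ℝ :=
  ∑ A : Finset V, if E A then configProb p A else 0

/-- The generalized hypercube `Q_{k,n}`: vertices are `{0,1}^n`, two vertices being adjacent
iff their Hamming distance is between `1` and `k`.  The usual hypercube `Q_n` is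
`cubeGraph n 1`. -/
def cubeGraph (n k : ℕ) : SimpleGraph (Fin n → Bool) where
  Adj x y := 1 ≤ hammingDist x y ∧ hammingDist x y ≤ k
  symm := by
    constructor
    intro x y h
    rwa [hammingDist_comm]
  loopless := by
    constructor
    intro x h
    simp [hammingDist_self] at h

/-- The critical probability for `r`-neighbour bootstrap percolation on `Q_{k,n}` where every
vertex is initially infected independently with probability `p`:
the supremum of all `p ∈ (0,1)` for which percolation has probability at most `1/2`. -/
def critProb (n k r : ℕ) : ℝ :=
  sSup {p : ℝ | p ∈ Set.Ioo (0 : ℝ) 1 ∧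
    probEvent p (fun A0 => percolates (cubeGraph n k) r A0) ≤ 1 / 2}

/-- The `Boot1(t)` process with base threshold `r`: at step `1` the threshold is `r - t`,
afterwards it is `r`. -/
def boot1Sets {V : Type*} [Fintype V] [DecidableEq V] (G : SimpleGraph V) (r t : ℕ)
    (A0 : Finset V) : ℕ → Finset V
  | 0 => A0
  | 1 => A0 ∪ Finset.univ.filter fun v => r - t ≤ (G.neighborFinset v ∩ A0).card
  | i + 2 =>
      boot1Sets G r t A0 (i + 1) ∪
        Finset.univ.filter fun v =>
          r ≤ (G.neighborFinset v ∩ boot1Sets G r t A0 (i + 1)).card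

/-- The `Boot2(t)` (= `Boot3(t)`) process with base threshold `r`: at step `1` the threshold
is `r - 2t`, at step `2` it is `r - t`, and afterwards it is `r`. -/
def boot2Sets {V : Type*} [Fintype V] [DecidableEq V] (G : SimpleGraph V) (r t : ℕ)
    (A0 : Finset V) : ℕ → Finset V
  | 0 => A0
  | 1 => A0 ∪ Finset.univ.filter fun v => r - 2 * t ≤ (G.neighborFinset v ∩ A0).card
  | 2 =>
      boot2Sets G r t A0 1 ∪
        Finset.univ.filter fun v =>
          r - t ≤ (G.neighborFinset v ∩ boot2Sets G r t A0 1).card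
  | i + 3 =>
      boot2Sets G r t A0 (i + 2) ∪
        Finset.univ.filter fun v =>
          r ≤ (G.neighborFinset v ∩ boot2Sets G r t A0 (i + 2)).card

/-!
If `A₃ ≠ A₂`, some vertex `v` enters at step 2, so more than `t` of its neighbours entered at
step 1, each having at least `r - 2t` neighbours in `A₀`. Fix `n` of them, a set `U`: a union bound
over `v` and `U` costs `2ⁿ Nⁿ = exp(O(n log n))`. For fixed `U` the event forces
`∑_{w ∈ A₀} |N(w) ∩ U| ≥ n (r - 2t)`, while the mean of this sum is `p n N` and `p` lies
`C₁ √(log n) / n^{k/2}` below `1/2`. Chernoff's bound with tilt `θ = √(log n) / n^{k/2}` makes this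
`exp(-c n log n)`; its variance term is `O(n log n)` thanks to the codegree bound
`|N(u) ∩ N(u')| ≤ 3k n^{k-1}` in `Q_{k,n}`. For `C₁` large the Chernoff bound beats the union bound,
and `P(A₃ ≠ A₂) ≤ e^{-n}`.
-/

open Real

section Bernoulli

variable {V : Type*} [Fintype V] [DecidableEq V] {p : ℝ}

lemma sum_configProb_mul_prod (p : ℝ) (g : V → ℝ) :
    ∑ A : Finset V, configProb p A * ∏ w ∈ A, g w = ∏ w, (1 - p + p * g w) := by
  simp_rw [add_comm (1 - p)]
  rw [prod_add, powerset_univ]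
  refine sum_congr rfl fun A _ => ?_
  rw [configProb, prod_mul_distrib, prod_const, prod_const, card_sdiff_of_subset (subset_univ A),
    card_univ]
  ring

lemma sum_configProb (p : ℝ) : ∑ A : Finset V, configProb p A = 1 := by
  simpa using sum_configProb_mul_prod p (fun _ : V => 1)

lemma configProb_nonneg (hp0 : 0 ≤ p) (hp1 : p ≤ 1) (A : Finset V) : 0 ≤ configProb p A :=
  mul_nonneg (pow_nonneg hp0 _) (pow_nonneg (sub_nonneg.2 hp1) _)

lemma probEvent_not (p : ℝ) (E : Finset V → Prop) :
    probEvent p (fun A => ¬ E A) = 1 - probEvent p E := by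
  rw [eq_sub_iff_add_eq, probEvent, probEvent, ← sum_add_distrib, ← sum_configProb (V := V) p]
  refine sum_congr rfl fun A _ => ?_
  by_cases h : E A <;> simp [h]

lemma probEvent_nonneg (hp0 : 0 ≤ p) (hp1 : p ≤ 1) (E : Finset V → Prop) :
    0 ≤ probEvent p E :=
  sum_nonneg fun A _ => ite_nonneg (configProb_nonneg hp0 hp1 A) le_rfl

lemma probEvent_mono (hp0 : 0 ≤ p) (hp1 : p ≤ 1) {E F : Finset V → Prop}
    (h : ∀ A, E A → F A) : probEvent p E ≤ probEvent p F := by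
  refine sum_le_sum fun A _ => ?_
  by_cases hE : E A
  · simp [hE, h A hE]
  · simpa [hE] using ite_nonneg (configProb_nonneg hp0 hp1 A) le_rfl

lemma probEvent_exists_le_sum (hp0 : 0 ≤ p) (hp1 : p ≤ 1) {ι : Type*} (s : Finset ι)
    (Q : ι → Finset V → Prop) :
    probEvent p (fun A => ∃ x ∈ s, Q x A) ≤ ∑ x ∈ s, probEvent p (Q x) := by
  have hterm (A : Finset V) (x : ι) : 0 ≤ if Q x A then configProb p A else 0 :=
    ite_nonneg (configProb_nonneg hp0 hp1 A) le_rfl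
  unfold probEvent
  rw [sum_comm]
  refine sum_le_sum fun A _ => ?_
  split_ifs with hA
  · obtain ⟨x, hx, hQ⟩ := hA
    calc configProb p A = if Q x A then configProb p A else 0 := (if_pos hQ).symm
      _ ≤ _ := single_le_sum (fun y _ => hterm A y) hx
  · exact sum_nonneg fun y _ => hterm A y

lemma probEvent_le_sum_configProb_mul (hp0 : 0 ≤ p) (hp1 : p ≤ 1) {E : Finset V → Prop}
    (g : Finset V → ℝ) (hg0 : ∀ A, 0 ≤ g A) (hg : ∀ A, E A → 1 ≤ g A) :
    probEvent p E ≤ ∑ A, configProb p A * g A := by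
  refine sum_le_sum fun A _ => ?_
  split_ifs with hA
  · exact le_mul_of_one_le_right (configProb_nonneg hp0 hp1 A) (hg A hA)
  · exact mul_nonneg (configProb_nonneg hp0 hp1 A) (hg0 A)

lemma one_sub_add_mul_exp_le_exp {x : ℝ} (hx : |x| ≤ 1) (hp0 : 0 ≤ p) :
    1 - p + p * exp x ≤ exp (p * x + p * x ^ 2) := by
  have h := (abs_le.1 (abs_exp_sub_one_sub_id_le hx)).2
  nlinarith [add_one_le_exp (p * x + p * x ^ 2)]

/-- Chernoff's bound, with the moment generating function of each summand bounded through
`exp x ≤ 1 + x + x ^ 2` on `[-1, 1]`. -/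
theorem probEvent_le_sum_le_exp (hp0 : 0 ≤ p) (hp1 : p ≤ 1) (f : V → ℝ) (hf : ∀ w, |f w| ≤ 1)
    (s : ℝ) :
    probEvent p (fun A => s ≤ ∑ w ∈ A, f w) ≤
      exp (-s + p * ∑ w, f w + p * ∑ w, f w ^ 2) := by
  calc probEvent p (fun A => s ≤ ∑ w ∈ A, f w)
      ≤ ∑ A, configProb p A * (exp (-s) * ∏ w ∈ A, exp (f w)) :=
        probEvent_le_sum_configProb_mul hp0 hp1 _ (fun A => by positivity) fun A hA => by
          rw [← exp_sum, ← exp_add]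
          exact one_le_exp (by linarith)
    _ = exp (-s) * ∏ w, (1 - p + p * exp (f w)) := by
        simp_rw [mul_left_comm _ (exp (-s)), ← mul_sum, sum_configProb_mul_prod]
    _ ≤ exp (-s) * ∏ w, exp (p * f w + p * f w ^ 2) := by
        refine mul_le_mul_of_nonneg_left (prod_le_prod (fun w _ => ?_) fun w _ => ?_) (exp_pos _).le
        · nlinarith [exp_pos (f w)]
        · exact one_sub_add_mul_exp_le_exp (hf w) hp0
    _ = _ := by rw [← exp_sum, ← exp_add, sum_add_distrib, mul_sum, mul_sum, add_assoc]

end Bernoulli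

section DoubleCounting

variable {V : Type*} [Fintype V] [DecidableEq V] (G : SimpleGraph V)

lemma card_neighborFinset_inter_eq_sum (U : Finset V) (w : V) :
    #(G.neighborFinset w ∩ U) = ∑ u ∈ U, if G.Adj u w then 1 else 0 := by
  rw [← card_filter, inter_comm, ← filter_mem_eq_inter]
  simp_rw [SimpleGraph.mem_neighborFinset, G.adj_comm]

lemma sum_card_neighborFinset_inter_comm (A U : Finset V) :
    ∑ w ∈ A, #(G.neighborFinset w ∩ U) = ∑ u ∈ U, #(G.neighborFinset u ∩ A) := by
  simp_rw [card_neighborFinset_inter_eq_sum]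
  rw [sum_comm]
  simp_rw [G.adj_comm]

lemma sum_sq_card_neighborFinset_inter (U : Finset V) :
    ∑ w, #(G.neighborFinset w ∩ U) ^ 2 =
      ∑ u ∈ U, ∑ u' ∈ U, #(G.neighborFinset u ∩ G.neighborFinset u') := by
  simp only [sq, card_neighborFinset_inter_eq_sum G U, sum_mul_sum, ite_zero_mul_ite_zero, mul_one]
  rw [sum_comm]
  refine sum_congr rfl fun u _ => ?_
  rw [sum_comm]
  refine sum_congr rfl fun u' _ => ?_
  rw [← card_filter, ← univ_inter (_ ∩ _), ← filter_mem_eq_inter]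
  simp_rw [mem_inter, SimpleGraph.mem_neighborFinset]

variable {G} {Δ Λ : ℕ}

lemma sum_card_neighborFinset_inter_le (hdeg : ∀ v, #(G.neighborFinset v) ≤ Δ) (U : Finset V) :
    ∑ w, #(G.neighborFinset w ∩ U) ≤ #U * Δ := by
  rw [sum_card_neighborFinset_inter_comm]
  simp_rw [inter_univ]
  exact sum_le_card_nsmul _ _ _ fun u _ => hdeg u

lemma sum_sq_card_neighborFinset_inter_le (hdeg : ∀ v, #(G.neighborFinset v) ≤ Δ)
    (hcodeg : ∀ u u', u ≠ u' → #(G.neighborFinset u ∩ G.neighborFinset u') ≤ Λ)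
    (U : Finset V) :
    ∑ w, #(G.neighborFinset w ∩ U) ^ 2 ≤ #U * Δ + #U ^ 2 * Λ := by
  have hrow : ∀ u ∈ U, ∑ u' ∈ U, #(G.neighborFinset u ∩ G.neighborFinset u') ≤ Δ + #U * Λ := by
    intro u hu
    rw [← add_sum_erase U _ hu, inter_self]
    gcongr
    · exact hdeg u
    · calc _ ≤ #(U.erase u) • Λ :=
            sum_le_card_nsmul _ _ _ fun u' hu' => hcodeg u u' (ne_of_mem_erase hu').symm
        _ ≤ #U * Λ := by rw [smul_eq_mul]; exact Nat.mul_le_mul_right _ card_erase_le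
  calc _ ≤ #U • (Δ + #U * Λ) := by
        rw [sum_sq_card_neighborFinset_inter]; exact sum_le_card_nsmul _ _ _ hrow
    _ = _ := by rw [smul_eq_mul]; ring

end DoubleCounting

section Boot

variable {V : Type*} [Fintype V] [DecidableEq V] (G : SimpleGraph V) (r t : ℕ) (A0 : Finset V)

lemma boot2Sets_one_subset_two : boot2Sets G r t A0 1 ⊆ boot2Sets G r t A0 2 := by
  rw [boot2Sets]
  exact subset_union_left

lemma boot2Sets_three_eq_of_two_eq (h : boot2Sets G r t A0 2 = boot2Sets G r t A0 1) :
    boot2Sets G r t A0 3 = boot2Sets G r t A0 2 := by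
  refine union_eq_left.2 fun v hv => ?_
  rw [mem_filter, h] at hv
  rw [boot2Sets]
  exact mem_union_right _ (mem_filter.2 ⟨mem_univ v, (Nat.sub_le r t).trans hv.2⟩)

/-- A vertex of `A₂ \ A₁` has fewer than `r - 2t` neighbours in `A₀` but at least `r - t` in `A₁`,
so more than `t` of its neighbours entered `A₁` through the threshold `r - 2t`. -/
theorem exists_powersetCard_of_boot2Sets_three_ne {j : ℕ} (hj : j ≤ t + 1)
    (h : boot2Sets G r t A0 3 ≠ boot2Sets G r t A0 2) :
    ∃ v, ∃ U ∈ powersetCard j (G.neighborFinset v),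
      ∀ u ∈ U, r - 2 * t ≤ #(G.neighborFinset u ∩ A0) := by
  set F := univ.filter fun u => r - 2 * t ≤ #(G.neighborFinset u ∩ A0)
  have hA1 : boot2Sets G r t A0 1 = A0 ∪ F := rfl
  obtain ⟨v, hv2, hv1⟩ : ∃ v ∈ boot2Sets G r t A0 2, v ∉ boot2Sets G r t A0 1 := by
    by_contra! hc
    exact h (boot2Sets_three_eq_of_two_eq G r t A0
      (Subset.antisymm hc (boot2Sets_one_subset_two G r t A0)))
  have hv1' : r - t ≤ #(G.neighborFinset v ∩ boot2Sets G r t A0 1) := by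
    rw [boot2Sets, mem_union, mem_filter] at hv2
    exact (hv2.resolve_left hv1).2
  have hv0 : #(G.neighborFinset v ∩ A0) < r - 2 * t := by
    by_contra! hc
    exact hv1 (by rw [hA1]; exact mem_union_right _ (mem_filter.2 ⟨mem_univ v, hc⟩))
  have hsplit : #(G.neighborFinset v ∩ boot2Sets G r t A0 1) ≤
      #(G.neighborFinset v ∩ A0) + #(G.neighborFinset v ∩ F) := by
    rw [hA1, inter_union_distrib_left]
    exact card_union_le _ _
  obtain ⟨U, hUF, hU⟩ := exists_subset_card_eq (s := G.neighborFinset v ∩ F) (n := j) (by omega)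
  refine ⟨v, U, mem_powersetCard.2 ⟨hUF.trans inter_subset_left, hU⟩, fun u hu => ?_⟩
  exact (mem_filter.1 (mem_inter.1 (hUF hu)).2).2

end Boot

section StabilityBound

variable {V : Type*} [Fintype V] [DecidableEq V] {G : SimpleGraph V} {Δ Λ : ℕ} {p θ : ℝ}

theorem probEvent_forall_le_card_inter_le (hdeg : ∀ v, #(G.neighborFinset v) ≤ Δ)
    (hcodeg : ∀ u u', u ≠ u' → #(G.neighborFinset u ∩ G.neighborFinset u') ≤ Λ)
    (hp0 : 0 ≤ p) (hp1 : p ≤ 1) (hθ : 0 ≤ θ) (U : Finset V) (hθU : θ * #U ≤ 1) (a : ℕ) :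
    probEvent p (fun A => ∀ u ∈ U, a ≤ #(G.neighborFinset u ∩ A)) ≤
      exp (-(θ * (#U * a)) + p * θ * (#U * Δ) + p * θ ^ 2 * (#U * Δ + #U ^ 2 * Λ)) := by
  set m : V → ℕ := fun w => #(G.neighborFinset w ∩ U)
  have hm (w : V) : |θ * m w| ≤ 1 := by
    rw [abs_of_nonneg (by positivity)]
    exact le_trans (by gcongr; exact card_le_card inter_subset_right) hθU
  have hsum : (∑ w, m w : ℝ) ≤ #U * Δ := by
    exact_mod_cast sum_card_neighborFinset_inter_le hdeg U
  have hsum_sq : (∑ w, (m w : ℝ) ^ 2) ≤ #U * Δ + #U ^ 2 * Λ := by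
    exact_mod_cast sum_sq_card_neighborFinset_inter_le hdeg hcodeg U
  calc _ ≤ probEvent p (fun A => θ * (#U * a) ≤ ∑ w ∈ A, θ * m w) := by
        refine probEvent_mono hp0 hp1 fun A hA => ?_
        rw [← mul_sum]
        gcongr
        have : #U * a ≤ ∑ w ∈ A, m w := by
          rw [sum_card_neighborFinset_inter_comm, ← smul_eq_mul]
          exact card_nsmul_le_sum _ _ _ hA
        exact_mod_cast this
    _ ≤ exp (-(θ * (#U * a)) + p * ∑ w, θ * m w + p * ∑ w, (θ * m w) ^ 2) :=
        probEvent_le_sum_le_exp hp0 hp1 _ hm _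
    _ ≤ _ := by
        rw [← mul_sum]
        simp_rw [mul_pow]
        rw [← mul_sum]
        have h1 : p * (θ * ∑ w, (m w : ℝ)) ≤ p * θ * (#U * Δ) := by
          rw [← mul_assoc]; gcongr
        have h2 : p * (θ ^ 2 * ∑ w, (m w : ℝ) ^ 2) ≤ p * θ ^ 2 * (#U * Δ + #U ^ 2 * Λ) := by
          rw [← mul_assoc]; gcongr
        exact exp_le_exp.2 (by linarith)

theorem probEvent_boot2Sets_three_ne_le (hdeg : ∀ v, #(G.neighborFinset v) ≤ Δ)
    (hcodeg : ∀ u u', u ≠ u' → #(G.neighborFinset u ∩ G.neighborFinset u') ≤ Λ)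
    (hp0 : 0 ≤ p) (hp1 : p ≤ 1) (hθ : 0 ≤ θ) {j r t : ℕ} (hj : j ≤ t + 1) (hθj : θ * j ≤ 1) :
    probEvent p (fun A0 => ¬ boot2Sets G r t A0 3 = boot2Sets G r t A0 2) ≤
      Fintype.card V * Δ ^ j * exp (-(θ * (j * (r - 2 * t : ℕ))) + p * θ * (j * Δ)
        + p * θ ^ 2 * (j * Δ + j ^ 2 * Λ)) := by
  set B := exp (-(θ * (j * (r - 2 * t : ℕ))) + p * θ * (j * Δ) + p * θ ^ 2 * (j * Δ + j ^ 2 * Λ))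
  calc _ ≤ probEvent p (fun A0 => ∃ v ∈ univ, ∃ U ∈ powersetCard j (G.neighborFinset v),
          ∀ u ∈ U, r - 2 * t ≤ #(G.neighborFinset u ∩ A0)) :=
        probEvent_mono hp0 hp1 fun A0 h => by
          simpa using exists_powersetCard_of_boot2Sets_three_ne G r t A0 hj h
    _ ≤ ∑ v, ∑ U ∈ powersetCard j (G.neighborFinset v),
          probEvent p (fun A0 => ∀ u ∈ U, r - 2 * t ≤ #(G.neighborFinset u ∩ A0)) :=
        (probEvent_exists_le_sum hp0 hp1 _ _).trans
          (sum_le_sum fun v _ => probEvent_exists_le_sum hp0 hp1 _ _)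
    _ ≤ ∑ v, ∑ U ∈ powersetCard j (G.neighborFinset v), B := by
        gcongr with v _ U hU
        obtain ⟨-, hU⟩ := mem_powersetCard.1 hU
        subst hU
        exact probEvent_forall_le_card_inter_le hdeg hcodeg hp0 hp1 hθ U hθj _
    _ ≤ ∑ _v : V, (Δ ^ j : ℝ) * B := by
        gcongr with v
        rw [sum_const, card_powersetCard, nsmul_eq_mul]
        gcongr
        exact_mod_cast (Nat.choose_le_pow _ _).trans (Nat.pow_le_pow_left (hdeg v) j)
    _ = _ := by rw [sum_const, card_univ, nsmul_eq_mul, mul_assoc]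

end StabilityBound

section Cube

open scoped symmDiff

variable {n k : ℕ}

def diffSet (x y : Fin n → Bool) : Finset (Fin n) := univ.filter fun i => x i ≠ y i

lemma card_diffSet (x y : Fin n → Bool) : #(diffSet x y) = hammingDist x y := rfl

lemma diffSet_injective (x : Fin n → Bool) : Function.Injective (diffSet x) := by
  intro y z h
  funext i
  have := congrArg (i ∈ ·) h
  simp only [diffSet, mem_filter, mem_univ, true_and, eq_iff_iff] at this
  revert this
  cases x i <;> cases y i <;> cases z i <;> simp

lemma diffSet_eq_symmDiff (x y z : Fin n → Bool) : diffSet y z = diffSet x y ∆ diffSet x z := by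
  ext i
  simp only [diffSet, mem_symmDiff, mem_filter, mem_univ, true_and]
  cases x i <;> cases y i <;> cases z i <;> simp

lemma mem_neighborFinset_cubeGraph {x y : Fin n → Bool} :
    y ∈ (cubeGraph n k).neighborFinset x ↔ 1 ≤ hammingDist x y ∧ hammingDist x y ≤ k :=
  SimpleGraph.mem_neighborFinset _ _ _

lemma sum_choose_Icc_le (hn : 1 ≤ n) (m : ℕ) : ∑ i ∈ Icc 1 m, n.choose i ≤ m * n ^ m :=
  calc _ ≤ ∑ _i ∈ Icc 1 m, n ^ m := sum_le_sum fun i hi =>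
        (Nat.choose_le_pow n i).trans (Nat.pow_le_pow_right hn (mem_Icc.1 hi).2)
    _ = _ := by simp

lemma pow_le_sum_choose_Icc (hk : 1 ≤ k) (hn : 2 * k ≤ n) :
    n ^ k ≤ 2 ^ k * k.factorial * ∑ i ∈ Icc 1 k, n.choose i :=
  calc n ^ k ≤ (2 * (n + 1 - k)) ^ k := Nat.pow_le_pow_left (by omega) k
    _ = 2 ^ k * (n + 1 - k) ^ k := mul_pow ..
    _ ≤ 2 ^ k * (k.factorial * n.choose k) := by
        rw [← Nat.descFactorial_eq_factorial_mul_choose]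
        gcongr
        exact Nat.pow_sub_le_descFactorial n k
    _ ≤ _ := by
        rw [mul_assoc]
        gcongr
        exact single_le_sum (f := n.choose) (fun _ _ => Nat.zero_le _) (mem_Icc.2 ⟨hk, le_rfl⟩)

lemma card_neighborFinset_cubeGraph_le (x : Fin n → Bool) :
    #((cubeGraph n k).neighborFinset x) ≤ ∑ i ∈ Icc 1 k, n.choose i :=
  calc _ ≤ #((Icc 1 k).biUnion fun i => powersetCard i (univ : Finset (Fin n))) := by
        refine card_le_card_of_injOn (diffSet x) (fun y hy => ?_) (diffSet_injective x).injOn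
        rw [mem_coe, mem_neighborFinset_cubeGraph] at hy
        simpa [mem_biUnion, mem_powersetCard, card_diffSet] using hy
    _ ≤ _ := card_biUnion_le.trans (by simp [card_powersetCard])

lemma diffSet_inter_nonempty {u u' y : Fin n → Bool} (hS : (diffSet u u').Nonempty)
    (hy : hammingDist u y = k) (hy' : hammingDist u' y ≤ k) :
    (diffSet u y ∩ diffSet u u').Nonempty := by
  by_contra hdisj
  rw [not_nonempty_iff_eq_empty, ← disjoint_iff_inter_eq_empty] at hdisj
  have hdist : hammingDist u' y = hammingDist u y + #(diffSet u u') := by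
    rw [← card_diffSet, diffSet_eq_symmDiff u, symmDiff_comm, hdisj.symmDiff_eq_sup, sup_eq_union,
      card_union_of_disjoint hdisj, card_diffSet]
  have := hS.card_pos
  omega

/-- A common neighbour of `u ≠ u'` flips either fewer than `k` coordinates of `u`, or exactly
`k` of them, one of which is among the at most `2k` coordinates where `u` and `u'` differ. -/
theorem card_inter_neighborFinset_cubeGraph_le {u u' : Fin n → Bool} (h : u ≠ u') :
    #((cubeGraph n k).neighborFinset u ∩ (cubeGraph n k).neighborFinset u') ≤
      3 * k * n ^ (k - 1) := by
  set S := diffSet u u'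
  obtain hempty | ⟨y₀, hy₀⟩ := ((cubeGraph n k).neighborFinset u ∩
    (cubeGraph n k).neighborFinset u').eq_empty_or_nonempty
  · simp [hempty]
  rw [mem_inter, mem_neighborFinset_cubeGraph, mem_neighborFinset_cubeGraph] at hy₀
  have hS : #S ≤ 2 * k := by
    have := hammingDist_triangle u y₀ u'
    rw [hammingDist_comm y₀] at this
    rw [card_diffSet]; omega
  have hSne : S.Nonempty := by
    rw [nonempty_iff_ne_empty]
    intro hS0
    exact h (diffSet_injective u (hS0.trans (by simp [diffSet])) ).symm
  have hn : 1 ≤ n := hSne.choose.pos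
  set W := (Icc 1 (k - 1)).biUnion (fun i => powersetCard i (univ : Finset (Fin n))) ∪
    S.biUnion fun s => (powersetCard (k - 1) univ).image (insert s)
  have hmaps : ∀ y ∈ (cubeGraph n k).neighborFinset u ∩ (cubeGraph n k).neighborFinset u',
      diffSet u y ∈ W := by
    intro y hy
    rw [mem_inter, mem_neighborFinset_cubeGraph, mem_neighborFinset_cubeGraph] at hy
    by_cases hsmall : hammingDist u y ≤ k - 1
    · refine mem_union_left _ (mem_biUnion.2 ⟨hammingDist u y, mem_Icc.2 ⟨hy.1.1, hsmall⟩, ?_⟩)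
      exact mem_powersetCard.2 ⟨subset_univ _, card_diffSet u y⟩
    · obtain ⟨s, hs⟩ := diffSet_inter_nonempty hSne (y := y) (k := k) (by omega) (by omega)
      obtain ⟨hsy, hsS⟩ := mem_inter.1 hs
      refine mem_union_right _ (mem_biUnion.2 ⟨s, hsS, mem_image.2 ⟨(diffSet u y).erase s, ?_,
        insert_erase hsy⟩⟩)
      refine mem_powersetCard.2 ⟨subset_univ _, ?_⟩
      rw [card_erase_of_mem hsy, card_diffSet]
      omega
  calc _ ≤ #W := card_le_card_of_injOn (diffSet u) hmaps (diffSet_injective u).injOn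
    _ ≤ (k - 1) * n ^ (k - 1) + #S * n ^ (k - 1) := by
        refine (card_union_le _ _).trans (add_le_add ?_ ?_)
        · exact card_biUnion_le.trans (by simpa [card_powersetCard] using sum_choose_Icc_le hn _)
        · refine card_biUnion_le.trans ((sum_le_card_nsmul _ _ _ fun s _ => ?_).trans le_rfl)
          refine card_image_le.trans ?_
          simpa [card_powersetCard] using Nat.choose_le_pow n (k - 1)
    _ ≤ k * n ^ (k - 1) + 2 * k * n ^ (k - 1) := by gcongr; exact Nat.sub_le k 1
    _ = 3 * k * n ^ (k - 1) := by ring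

end Cube

section Asymptotics

lemma rpow_div_two_mul_self {x : ℝ} (hx : 0 ≤ x) (k : ℕ) :
    x ^ ((k : ℝ) / 2) * x ^ ((k : ℝ) / 2) = x ^ k := by
  rw [rpow_div_two_eq_sqrt _ hx, rpow_natCast, ← mul_pow, mul_self_sqrt hx]

lemma mul_sqrt_log_le_rpow_div_two {x : ℝ} (hx : 1 ≤ x) {k : ℕ} (hk : 3 ≤ k) :
    x * √(log x) ≤ x ^ ((k : ℝ) / 2) := by
  rw [rpow_div_two_eq_sqrt _ (by linarith), rpow_natCast]
  calc x * √(log x) ≤ √x ^ 2 * √x := by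
        rw [sq_sqrt (by linarith)]
        gcongr
        exact log_le_self (by linarith)
    _ = √x ^ 3 := by ring
    _ ≤ √x ^ k := pow_le_pow_right₀ (one_le_sqrt.2 hx) hk

/-- The deviation `1/2 - p` in units of `C₁`; it is also the exponential tilt in Chernoff's
bound. -/
def tilt (k : ℕ) (x : ℝ) : ℝ := √(log x) / x ^ ((k : ℝ) / 2)

variable {k : ℕ} {x : ℝ}

lemma tilt_nonneg (hx : 0 ≤ x) : 0 ≤ tilt k x := by unfold tilt; positivity

lemma tilt_mul_rpow_div_two (hx : 0 < x) : tilt k x * x ^ ((k : ℝ) / 2) = √(log x) :=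
  div_mul_cancel₀ _ (by positivity)

lemma tilt_sq_mul_pow (hx : 1 ≤ x) : tilt k x ^ 2 * x ^ k = log x := by
  rw [← rpow_div_two_mul_self (by linarith) k, ← sq, ← mul_pow, tilt_mul_rpow_div_two (by linarith),
    sq_sqrt (log_nonneg hx)]

lemma tilt_mul_le_one (hk : 3 ≤ k) (hx : 1 ≤ x) : tilt k x * x ≤ 1 := by
  rw [tilt, div_mul_eq_mul_div, div_le_one (by positivity), mul_comm]
  exact mul_sqrt_log_le_rpow_div_two hx hk

lemma tilt_mul_ceil_rpow_div_two_le (hk : 3 ≤ k) (hx : 1 ≤ x) (hL : 1 ≤ log x) :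
    tilt k x * ⌈x ^ ((k : ℝ) / 2)⌉₊ ≤ 2 * log x := by
  have h1 : 1 ≤ x ^ ((k : ℝ) / 2) := one_le_rpow hx (by positivity)
  calc tilt k x * ⌈x ^ ((k : ℝ) / 2)⌉₊ ≤ tilt k x * (2 * x ^ ((k : ℝ) / 2)) := by
        gcongr
        · exact tilt_nonneg (by linarith)
        · linarith [Nat.ceil_lt_add_one (by linarith : 0 ≤ x ^ ((k : ℝ) / 2))]
    _ = 2 * √(log x) := by rw [mul_left_comm, tilt_mul_rpow_div_two (by linarith)]
    _ ≤ 2 * log x := by gcongr; exact (sqrt_le_left (by linarith)).2 (by nlinarith)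

variable {L θ κ N t a p : ℝ}

lemma le_chernoff_drift (hx : 0 ≤ x) (hθ : 0 ≤ θ) (hp : p = 1 / 2 - κ * (3 * k + 5) * θ)
    (hθN : L ≤ κ * θ ^ 2 * N) (hθt : θ * t ≤ 2 * L) (ha : N / 2 - 2 * t ≤ a) :
    (3 * k + 1) * (x * L) ≤ θ * (x * a) - p * θ * (x * N) :=
  calc (3 * k + 1) * (x * L) ≤ (3 * k + 5) * x * (κ * θ ^ 2 * N) - 2 * x * (θ * t) := by
        have : (3 * k + 5) * x * L ≤ (3 * k + 5) * x * (κ * θ ^ 2 * N) := by gcongr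
        nlinarith
    _ = θ * x * (N / 2 - 2 * t - p * N) := by rw [hp]; ring
    _ ≤ θ * x * (a - p * N) := by gcongr
    _ = _ := by ring

lemma chernoff_variance_le (hx : 0 ≤ x) (hp0 : 0 ≤ p) (hp : p ≤ 1 / 2) (hθ : θ ^ 2 * x ^ k = L)
    (hN : N ≤ k * x ^ k) {Λ : ℝ} (hΛ : x * Λ = 3 * k * x ^ k) :
    p * θ ^ 2 * (x * N + x ^ 2 * Λ) ≤ 2 * k * (x * L) :=
  calc p * θ ^ 2 * (x * N + x ^ 2 * Λ) = p * x * (θ ^ 2 * N + θ ^ 2 * (x * Λ)) := by ring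
    _ ≤ p * x * (θ ^ 2 * (k * x ^ k) + θ ^ 2 * (3 * k * x ^ k)) := by
        rw [hΛ]
        exact mul_le_mul_of_nonneg_left (by gcongr) (mul_nonneg hp0 hx)
    _ ≤ 1 / 2 * x * (θ ^ 2 * (k * x ^ k) + θ ^ 2 * (3 * k * x ^ k)) := by gcongr
    _ = _ := by rw [← hθ]; ring

lemma half_sub_mul_tilt_mem_Icc (hk : 3 ≤ k) (hx : 1 ≤ x) {C : ℝ} (hC0 : 0 ≤ C)
    (hC : 2 * C ≤ x) : 1 / 2 - C * tilt k x ∈ Set.Icc 0 (1 / 2) := by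
  have hCθ : C * tilt k x * x ≤ 1 / 2 * x := by
    nlinarith [mul_le_mul_of_nonneg_left (tilt_mul_le_one hk hx) hC0]
  have := le_of_mul_le_mul_right hCθ (by linarith)
  exact ⟨by linarith, by linarith [mul_nonneg hC0 (tilt_nonneg (k := k) (by linarith : 0 ≤ x))]⟩

/-- In units of `n log n`, the union bound costs `k`, the drift gains `3k + 1` and the variance
loses `2k`. -/
theorem two_pow_mul_pow_mul_exp_le {n k N r t : ℕ} {p : ℝ} (hk : 3 ≤ k) (hn : 2 * k ≤ n)
    (hC : 2 * (2 ^ k * k.factorial * (3 * k + 5)) ≤ (n : ℝ)) (hlog : log (2 * k) + 1 ≤ log n)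
    (hN : N = ∑ i ∈ Icc 1 k, n.choose i) (hr : r = ⌈(N : ℝ) / 2⌉₊)
    (ht : t = ⌈(n : ℝ) ^ ((k : ℝ) / 2)⌉₊)
    (hp : p = 1 / 2 - 2 ^ k * k.factorial * (3 * k + 5) * tilt k n) :
    (2 : ℝ) ^ n * N ^ n * exp (-(tilt k n * (n * (r - 2 * t : ℕ))) + p * tilt k n * (n * N)
      + p * tilt k n ^ 2 * (n * N + n ^ 2 * (3 * k * n ^ (k - 1) : ℕ))) ≤ exp (-n) := by
  set θ := tilt k n
  set κ : ℝ := 2 ^ k * k.factorial with hκ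
  set L := log (n : ℝ)
  have hn1 : (1 : ℝ) ≤ n := by norm_cast; omega
  have hL : 1 ≤ L := by linarith [log_nonneg (by norm_cast; omega : (1 : ℝ) ≤ 2 * k)]
  obtain ⟨hp0, hp1⟩ := hp ▸ half_sub_mul_tilt_mem_Icc hk hn1 (by positivity) hC
  have hNlo : (n : ℝ) ^ k ≤ κ * N := by
    rw [hκ, hN]; exact_mod_cast pow_le_sum_choose_Icc (by omega) hn
  have hNhi : (N : ℝ) ≤ k * (n : ℝ) ^ k := by rw [hN]; exact_mod_cast sum_choose_Icc_le (by omega) k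
  have hN0 : (0 : ℝ) < N :=
    pos_of_mul_pos_right ((by positivity : (0 : ℝ) < n ^ k).trans_le hNlo) (by positivity)
  have hΛ : n * ((3 * k * n ^ (k - 1) : ℕ) : ℝ) = 3 * k * (n : ℝ) ^ k := by
    push_cast
    rw [mul_left_comm, ← pow_succ', Nat.sub_add_cancel (by omega)]
  have ha : (N : ℝ) / 2 - 2 * t ≤ ((r - 2 * t : ℕ) : ℝ) := by
    have : (r : ℝ) ≤ ((r - 2 * t : ℕ) : ℝ) + 2 * t := by exact_mod_cast le_tsub_add
    linarith [hr ▸ Nat.le_ceil ((N : ℝ) / 2)]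
  have hdrift := le_chernoff_drift (x := n) (by positivity) (tilt_nonneg (by positivity)) hp
    (by rw [← tilt_sq_mul_pow hn1, mul_comm κ, mul_assoc]; gcongr)
    (ht ▸ tilt_mul_ceil_rpow_div_two_le hk hn1 hL) ha
  have hvar := chernoff_variance_le (by positivity) hp0 hp1 (tilt_sq_mul_pow hn1) hNhi hΛ
  have hlogN : log (2 * N) ≤ log (2 * k) + k * L := by
    rw [← log_pow, ← log_mul (by positivity) (by positivity)]
    exact log_le_log (by positivity) (by linarith)
  rw [← mul_pow, ← exp_log (by positivity : (0 : ℝ) < (2 * N) ^ n), ← exp_add, log_pow]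
  gcongr
  nlinarith [mul_le_mul_of_nonneg_left hlogN (by positivity : (0 : ℝ) ≤ n),
    mul_le_mul_of_nonneg_left hlog (by positivity : (0 : ℝ) ≤ n)]

theorem abs_probEvent_boot2Sets_cubeGraph_sub_one_le {n k N r t : ℕ} {p : ℝ} (hk : 3 ≤ k)
    (hn : 2 * k ≤ n) (hC : 2 * (2 ^ k * k.factorial * (3 * k + 5)) ≤ (n : ℝ))
    (hlog : log (2 * k) + 1 ≤ log n) (hN : N = ∑ i ∈ Icc 1 k, n.choose i)
    (hr : r = ⌈(N : ℝ) / 2⌉₊) (ht : t = ⌈(n : ℝ) ^ ((k : ℝ) / 2)⌉₊)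
    (hp : p = 1 / 2 - 2 ^ k * k.factorial * (3 * k + 5) * tilt k n) :
    |probEvent p (fun A0 : Finset (Fin n → Bool) =>
      boot2Sets (cubeGraph n k) r t A0 3 = boot2Sets (cubeGraph n k) r t A0 2) - 1| ≤
      exp (-(n : ℝ)) := by
  have hn1 : (1 : ℝ) ≤ n := by norm_cast; omega
  obtain ⟨hp0, hp1⟩ := hp ▸ half_sub_mul_tilt_mem_Icc hk hn1 (by positivity) hC
  have hnt : n ≤ t + 1 := by
    have hk2 : (1 : ℝ) ≤ k / 2 := by rw [le_div_iff₀ two_pos]; norm_cast; omega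
    have : n ≤ t := by
      rw [ht]
      exact_mod_cast (self_le_rpow_of_one_le hn1 hk2).trans (Nat.le_ceil _)
    omega
  rw [abs_sub_comm, ← probEvent_not, abs_of_nonneg (probEvent_nonneg hp0 (by linarith) _)]
  refine (probEvent_boot2Sets_three_ne_le (fun x => hN ▸ card_neighborFinset_cubeGraph_le x)
    (fun u u' h => card_inter_neighborFinset_cubeGraph_le h) hp0 (by linarith)
    (tilt_nonneg (by positivity)) hnt (tilt_mul_le_one hk hn1)).trans ?_
  simpa using two_pow_mul_pow_mul_exp_le hk hn hC hlog hN hr ht hp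

end Asymptotics

/-- Fix an integer `k ≥ 3`.  There are constants `C₁(k), C₂(k) > 0` such
that in the process `Boot3(t)` (implemented by `boot2Sets`, which has the same update rule)
on `Q_{k,n}` with base threshold `⌈N/2⌉` (where `N = ∑_{i=1}^k C(n,i)`),
`t = ⌈C₂(k) n^{k/2}⌉` and initial infection probability
`p = 1/2 - C₁(k)√(log n)/n^{k/2}`, we have `P(A_3 = A_2) → 1` as `n → ∞`. -/
theorem boot3_stabilizes_Qkn (k : ℕ) (hk : 3 ≤ k) :
    ∃ C₁ C₂ : ℝ, 0 < C₁ ∧ 0 < C₂ ∧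
      Filter.Tendsto
        (fun n : ℕ =>
          probEvent (1 / 2 - C₁ * Real.sqrt (Real.log (n : ℝ)) / (n : ℝ) ^ ((k : ℝ) / 2))
            (fun A0 : Finset (Fin n → Bool) =>
              boot2Sets (cubeGraph n k) ⌈((∑ i ∈ Finset.Icc 1 k, n.choose i : ℕ) : ℝ) / 2⌉₊
                  ⌈C₂ * (n : ℝ) ^ ((k : ℝ) / 2)⌉₊ A0 3 =
                boot2Sets (cubeGraph n k) ⌈((∑ i ∈ Finset.Icc 1 k, n.choose i : ℕ) : ℝ) / 2⌉₊
                  ⌈C₂ * (n : ℝ) ^ ((k : ℝ) / 2)⌉₊ A0 2))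
        Filter.atTop (nhds 1) := by
  refine ⟨2 ^ k * k.factorial * (3 * k + 5), 1, by positivity, one_pos, ?_⟩
  have hn : Tendsto (fun n : ℕ => (n : ℝ)) atTop atTop := tendsto_natCast_atTop_atTop
  refine tendsto_iff_norm_sub_tendsto_zero.2 (squeeze_zero' (.of_forall fun n => norm_nonneg _) ?_
    (tendsto_exp_neg_atTop_nhds_zero.comp hn))
  filter_upwards [eventually_ge_atTop (2 * k), hn.eventually_ge_atTop (2 * _),
    (tendsto_log_atTop.comp hn).eventually_ge_atTop (log (2 * k) + 1)] with n h2k hC hlog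
  exact abs_probEvent_boot2Sets_cubeGraph_sub_one_le hk h2k hC hlog rfl rfl (by rw [one_mul])
    (by rw [mul_div_assoc]; rfl)

end
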